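/- Let f : ℝ≥0 → ℝ≥0 be continuous with f(0) = 0 and let t₁, t₂ ≥ 0. For any s at which f attains its minimum over [min(t₁,t₂), max(t₁,t₂)], the point p_f(s) is the most recent common ancestor of p_f(t₁) and p_f(t₂) in the real tree T_f, and its distance to the root equals min over [min(t₁,t₂), max(t₁,t₂)] of f. -/

import Mathlib

open Set
open scoped NNReal

/-- The pseudo-distance `d_f(s,t) = f s + f t − 2 inf_{[s∧t, s∨t]} f` on times; the real
tree `T_f` coded by `f` is the quotient of `ℝ≥0` by `d_f = 0`, with projection `p_f` and
root `p_f 0`. -/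
noncomputable def treeDist (f : ℝ≥0 → ℝ) (s t : ℝ≥0) : ℝ :=
  f s + f t - 2 * sInf (f '' Set.Icc (min s t) (max s t))

/-- `ancT f a b` means `p_f a ⪯ p_f b` in the tree coded by `f`, i.e.
`inf_{[a∧b, a∨b]} f = f a`. -/
def ancT (f : ℝ≥0 → ℝ) (a b : ℝ≥0) : Prop :=
  sInf (f '' Set.Icc (min a b) (max a b)) = f a

/-- `p_f t` belongs to the `h`-trimming `Tr^h(T_f)`, i.e.
`sup { d_f(p_f t, y) : y ⪰ p_f t } ≥ h`. -/
def TrimTime (h : ℝ) (f : ℝ≥0 → ℝ) (t : ℝ≥0) : Prop :=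
  h ≤ sSup ((fun s => treeDist f t s) '' {s | ancT f t s})

open scoped Interval

/-! `p_f a ⪯ p_f b` says exactly that `f` is minimal at `a` on `[[a, b]]`. Hence an argmin `s`
of `f` on `[[t₁, t₂]]` lies below both endpoints, and a common ancestor `u` of `p_f t₁` and
`p_f t₂` lies below `p_f s`, because `[[u, s]]` is covered by `[[u, t₁]] ∪ [[u, t₂]]`. -/

lemma Set.uIcc_subset_uIcc_union_uIcc_of_mem {α : Type*} [LinearOrder α] {a b c d : α}
    (h : c ∈ [[a, b]]) : [[d, c]] ⊆ [[d, a]] ∪ [[d, b]] := by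
  intro w hw
  simp only [mem_union, mem_uIcc] at h hw ⊢
  grind

lemma ancT_iff_isMinOn {f : ℝ≥0 → ℝ} (hf : BddBelow (range f)) {a b : ℝ≥0} :
    ancT f a b ↔ IsMinOn f [[a, b]] a := by
  refine ⟨fun h w hw => ?_, fun h => (IsLeast.csInf_eq ⟨mem_image_of_mem f left_mem_uIcc, ?_⟩)⟩
  · exact h ▸ csInf_le (hf.mono (image_subset_range _ _)) (mem_image_of_mem f hw)
  · rintro _ ⟨w, hw, rfl⟩
    exact h hw

lemma isMinOn_of_eq_csInf {α β : Type*} [ConditionallyCompleteLattice β] {f : α → β}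
    (hf : BddBelow (range f)) {S : Set α} {s : α} (h : f s = sInf (f '' S)) : IsMinOn f S s :=
  fun _ hw => h ▸ csInf_le (hf.mono (image_subset_range _ _)) (mem_image_of_mem f hw)

lemma ancT_of_isMinOn_uIcc {f : ℝ≥0 → ℝ} (hf : BddBelow (range f)) {t₁ t₂ s t : ℝ≥0}
    (hmin : IsMinOn f [[t₁, t₂]] s) (hs : s ∈ [[t₁, t₂]]) (ht : t ∈ [[t₁, t₂]]) :
    ancT f s t :=
  (ancT_iff_isMinOn hf).2 (hmin.on_subset (uIcc_subset_uIcc hs ht))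

lemma ancT_of_ancT_of_mem_uIcc {f : ℝ≥0 → ℝ} (hf : BddBelow (range f)) {t₁ t₂ s u : ℝ≥0}
    (h₁ : ancT f u t₁) (h₂ : ancT f u t₂) (hs : s ∈ [[t₁, t₂]]) : ancT f u s := by
  rw [ancT_iff_isMinOn hf] at h₁ h₂ ⊢
  intro w hw
  rcases uIcc_subset_uIcc_union_uIcc_of_mem hs hw with hw | hw
  exacts [h₁ hw, h₂ hw]

lemma treeDist_zero_left {f : ℝ≥0 → ℝ} (hpos : ∀ u, 0 ≤ f u) (hf0 : f 0 = 0) (s : ℝ≥0) :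
    treeDist f 0 s = f s := by
  have hroot : sInf (f '' Icc (min 0 s) (max 0 s)) = 0 :=
    hf0 ▸ IsLeast.csInf_eq ⟨mem_image_of_mem f left_mem_uIcc, by
      rintro _ ⟨u, -, rfl⟩
      exact hf0 ▸ hpos u⟩
  simp only [treeDist, hroot, hf0]
  ring

theorem argmin_is_mrca
    (f : ℝ≥0 → ℝ) (hpos : ∀ u, 0 ≤ f u) (hf0 : f 0 = 0)
    (t₁ t₂ s : ℝ≥0) (hs : s ∈ Set.Icc (min t₁ t₂) (max t₁ t₂))
    (hmin : f s = sInf (f '' Set.Icc (min t₁ t₂) (max t₁ t₂))) :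
    (ancT f s t₁ ∧ ancT f s t₂ ∧ ∀ u, ancT f u t₁ → ancT f u t₂ → ancT f u s) ∧
    treeDist f 0 s = sInf (f '' Set.Icc (min t₁ t₂) (max t₁ t₂)) := by
  have hbdd : BddBelow (range f) := ⟨0, forall_mem_range.2 hpos⟩
  have hs_min : IsMinOn f [[t₁, t₂]] s := isMinOn_of_eq_csInf hbdd hmin
  refine ⟨⟨?_, ?_, fun u h₁ h₂ => ancT_of_ancT_of_mem_uIcc hbdd h₁ h₂ hs⟩, ?_⟩
  · exact ancT_of_isMinOn_uIcc hbdd hs_min hs left_mem_uIcc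
  · exact ancT_of_isMinOn_uIcc hbdd hs_min hs right_mem_uIcc
  · rw [treeDist_zero_left hpos hf0, hmin]
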